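/- If a fractional committee $\vec{p}$ element-wise dominates the committee given by some maximum flow on the network representation $\mathcal{N}$ (i.e., $p_c \geq f(c,t)$ for all $c$, for some max flow $f$), then $\vec{p}$ satisfies group resource proportionality. -/
import Mathlib


open Finset

/-- The penalty term in the GRP lower bound for a group `S` of voters:
`max_{T ⊆ S} (|T| * k / n - |⋃_{i ∈ T} A i|)`. -/
noncomputable def grpPenalty {C : Type*} [DecidableEq C] (n k : ℕ)
    (A : Fin n → Finset C) (S : Finset (Fin n)) : ℝ :=
  S.powerset.sup' ⟨∅, Finset.empty_mem_powerset S⟩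
    fun T => (T.card : ℝ) * k / n - ((T.sup A).card : ℝ)

/-- Group resource proportionality: for every group `S` of voters, the probability mass on
candidates approved by some member of `S` is at least `|S| * k / n` minus the penalty. -/
def GRP {C : Type*} [DecidableEq C] (n k : ℕ) (A : Fin n → Finset C) (p : C → ℝ) : Prop :=
  ∀ S : Finset (Fin n),
    (S.card : ℝ) * k / n - grpPenalty n k A S ≤ ∑ c ∈ S.sup A, p c


/-- A feasible flow on the network representation of a committee voting instance, encoded
by the voter-to-candidate flows `x i c` (flow is only allowed on arcs `(i, c)` with
`c ∈ A i`; the source-to-voter flow is `∑ c, x i c ≤ k/n` and the candidate-to-sink flow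
is `∑ i, x i c ≤ 1`, so conservation holds by definition). -/
def IsFeasibleFlow {C : Type*} [Fintype C] (n k : ℕ) (A : Fin n → Finset C)
    (x : Fin n → C → ℝ) : Prop :=
  (∀ i c, 0 ≤ x i c) ∧ (∀ i c, c ∉ A i → x i c = 0) ∧
    (∀ i, ∑ c, x i c ≤ (k : ℝ) / n) ∧ (∀ c, ∑ i, x i c ≤ 1)

/-- The value of a flow. -/
def flowValue {C : Type*} [Fintype C] {n : ℕ} (x : Fin n → C → ℝ) : ℝ :=
  ∑ i, ∑ c, x i c

/-- A maximum flow on the network representation. -/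
def IsMaxFlow {C : Type*} [Fintype C] (n k : ℕ) (A : Fin n → Finset C)
    (x : Fin n → C → ℝ) : Prop :=
  IsFeasibleFlow n k A x ∧
    ∀ y, IsFeasibleFlow n k A y → flowValue y ≤ flowValue x


section GRPAux

variable {C : Type*} [Fintype C] [DecidableEq C]

/-- Residual-network reachability from the deficient voters of `S`. -/
inductive Reach (n k : ℕ) (A : Fin n → Finset C) (x : Fin n → C → ℝ)
    (S : Finset (Fin n)) : Fin n ⊕ C → Prop
  | base (i : Fin n) (hi : i ∈ S) (h : ∑ c, x i c < (k : ℝ) / n) : Reach n k A x S (.inl i)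
  | cand (i : Fin n) (c : C) (h : Reach n k A x S (.inl i)) (hc : c ∈ A i) :
      Reach n k A x S (.inr c)
  | voter (j : Fin n) (c : C) (h : Reach n k A x S (.inr c)) (hx : 0 < x j c) :
      Reach n k A x S (.inl j)

/-- The augmentation invariant carried along the reachability derivation. -/
def ReachInv (n k : ℕ) (A : Fin n → Finset C) (x : Fin n → C → ℝ) : Fin n ⊕ C → Prop
  | .inl i => ∃ M : ℝ, 0 ≤ M ∧ ∀ ε : ℝ, 0 < ε → ∃ y : Fin n → C → ℝ, ∃ δ : ℝ,
      0 < δ ∧ δ ≤ ε ∧ IsFeasibleFlow n k A y ∧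
      (∀ c, ∑ j, y j c = ∑ j, x j c) ∧
      (∑ c, y i c ≤ (k : ℝ) / n - δ) ∧
      (∀ j c, |y j c - x j c| ≤ M * δ)
  | .inr c => ∃ M : ℝ, 0 ≤ M ∧ ∀ ε : ℝ, 0 < ε → ∃ y : Fin n → C → ℝ, ∃ δ : ℝ,
      0 < δ ∧ δ ≤ ε ∧
      (∀ j c', 0 ≤ y j c') ∧ (∀ j c', c' ∉ A j → y j c' = 0) ∧
      (∀ j, ∑ c', y j c' ≤ (k : ℝ) / n) ∧
      (∀ c', c' ≠ c → ∑ j, y j c' = ∑ j, x j c') ∧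
      (∑ j, y j c = (∑ j, x j c) + δ) ∧
      (∀ j c', |y j c' - x j c'| ≤ M * δ)

theorem reach_inv {n k : ℕ} {A : Fin n → Finset C} {x : Fin n → C → ℝ}
    {S : Finset (Fin n)} (hfeas : IsFeasibleFlow n k A x)
    {v : Fin n ⊕ C} (h : Reach n k A x S v) : ReachInv n k A x v := by
  induction h with
  | base i hi h =>
    refine ⟨0, le_refl 0, fun ε hε => ?_⟩
    refine ⟨x, min ε ((k : ℝ) / n - ∑ c, x i c), lt_min hε (by linarith), min_le_left _ _,
      hfeas, fun c => rfl, ?_, fun j c => by simp⟩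
    have := min_le_right ε ((k : ℝ) / n - ∑ c, x i c)
    linarith
  | cand i c hR hc IH =>
    obtain ⟨M, hM0, hM⟩ := IH
    refine ⟨M + 1, by linarith, fun ε hε => ?_⟩
    obtain ⟨y, δ, hδ0, hδε, ⟨hy0, hysupp, hycap, hysink⟩, hinfl, hslack, hbd⟩ := hM ε hε
    set y' : Fin n → C → ℝ := fun j' c' => y j' c' + if j' = i ∧ c' = c then δ else 0 with hy'
    have hrow : ∀ j', ∑ c', y' j' c' = (∑ c', y j' c') + (if j' = i then δ else 0) := by
      intro j'
      rw [hy', Finset.sum_add_distrib]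
      congr 1
      by_cases hj : j' = i
      · simp [hj]
      · simp [hj]
    have hcol : ∀ c', ∑ j', y' j' c' = (∑ j', y j' c') + (if c' = c then δ else 0) := by
      intro c'
      rw [hy', Finset.sum_add_distrib]
      congr 1
      by_cases hcc : c' = c
      · simp [hcc]
      · simp [hcc]
    refine ⟨y', δ, hδ0, hδε, ?_, ?_, ?_, ?_, ?_, ?_⟩
    · intro j' c'
      rw [hy']
      dsimp only
      split_ifs with h
      · linarith [hy0 j' c']
      · simpa using hy0 j' c'
    · intro j' c' hcn
      rw [hy']
      dsimp only
      rw [hysupp j' c' hcn]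
      split_ifs with h
      · exact absurd (h.1 ▸ h.2 ▸ hc) hcn
      · ring
    · intro j'
      rw [hrow j']
      by_cases hj : j' = i
      · subst hj
        rw [if_pos rfl]
        linarith
      · simp only [if_neg hj]
        simpa using hycap j'
    · intro c' hne
      rw [hcol c', if_neg hne, add_zero]
      exact hinfl c'
    · rw [hcol c, if_pos rfl, hinfl c]
    · intro j' c'
      rw [hy']
      dsimp only
      have h1 := hbd j' c'
      have h2 : |y j' c' - x j' c' + (if j' = i ∧ c' = c then δ else 0)| ≤
          |y j' c' - x j' c'| + |if j' = i ∧ c' = c then δ else 0| := abs_add_le _ _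
      have h3 : |if j' = i ∧ c' = c then δ else 0| ≤ δ := by
        split_ifs
        · rw [abs_of_pos hδ0]
        · simp [le_of_lt hδ0]
      have : y j' c' + (if j' = i ∧ c' = c then δ else 0) - x j' c' =
          y j' c' - x j' c' + (if j' = i ∧ c' = c then δ else 0) := by ring
      rw [this]
      nlinarith
  | voter j c hR hxjc IH =>
    obtain ⟨M, hM0, hM⟩ := IH
    have hMpos : (0 : ℝ) < 2 * (M + 1) := by linarith
    refine ⟨M + 1, by linarith, fun ε hε => ?_⟩
    have hε' : 0 < min ε (x j c / (2 * (M + 1))) :=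
      lt_min hε (div_pos hxjc hMpos)
    obtain ⟨y, δ, hδ0, hδε', hy0, hysupp, hycap, hinflne, hinflc, hbd⟩ :=
      hM (min ε (x j c / (2 * (M + 1)))) hε'
    have hδε : δ ≤ ε := le_trans hδε' (min_le_left _ _)
    have hδx : δ * (2 * (M + 1)) ≤ x j c := by
      have := le_trans hδε' (min_le_right _ _)
      exact (le_div_iff₀ hMpos).mp this
    have hMδ : 0 ≤ M * δ := mul_nonneg hM0 hδ0.le
    have hyjc : δ ≤ y j c - δ * (M) := by
      have h1 := hbd j c
      rw [abs_le] at h1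
      nlinarith
    have hyjcδ : δ ≤ y j c := by nlinarith
    have hcAj : c ∈ A j := by
      by_contra hcn
      exact absurd (hfeas.2.1 j c hcn) (ne_of_gt hxjc)
    set y' : Fin n → C → ℝ := fun j' c' => y j' c' - if j' = j ∧ c' = c then δ else 0 with hy'
    have hrow : ∀ j', ∑ c', y' j' c' = (∑ c', y j' c') - (if j' = j then δ else 0) := by
      intro j'
      rw [hy', Finset.sum_sub_distrib]
      congr 1
      by_cases hj : j' = j
      · simp [hj]
      · simp [hj]
    have hcol : ∀ c', ∑ j', y' j' c' = (∑ j', y j' c') - (if c' = c then δ else 0) := by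
      intro c'
      rw [hy', Finset.sum_sub_distrib]
      congr 1
      by_cases hcc : c' = c
      · simp [hcc]
      · simp [hcc]
    have hcolx : ∀ c', ∑ j', y' j' c' = ∑ j', x j' c' := by
      intro c'
      by_cases hcc : c' = c
      · subst hcc
        rw [hcol c', if_pos rfl, hinflc]
        ring
      · rw [hcol c', if_neg hcc, hinflne c' hcc]
        ring
    refine ⟨y', δ, hδ0, hδε, ⟨?_, ?_, ?_, ?_⟩, hcolx, ?_, ?_⟩
    · intro j' c'
      rw [hy']
      dsimp only
      split_ifs with h
      · rw [h.1, h.2]; linarith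
      · simpa using hy0 j' c'
    · intro j' c' hcn
      rw [hy']
      dsimp only
      rw [hysupp j' c' hcn]
      split_ifs with h
      · exact absurd (h.1 ▸ h.2 ▸ hcAj) hcn
      · ring
    · intro j'
      rw [hrow j']
      split_ifs with hj
      · linarith [hycap j']
      · simpa using hycap j'
    · intro c'
      rw [hcolx c']
      exact hfeas.2.2.2 c'
    · rw [hrow j, if_pos rfl]
      linarith [hycap j]
    · intro j' c'
      rw [hy']
      dsimp only
      have h1 := hbd j' c'
      have h3 : |if j' = j ∧ c' = c then δ else 0| ≤ δ := by
        split_ifs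
        · rw [abs_of_pos hδ0]
        · simp [le_of_lt hδ0]
      have h2 : |y j' c' - x j' c' - (if j' = j ∧ c' = c then δ else 0)| ≤
          |y j' c' - x j' c'| + |if j' = j ∧ c' = c then δ else 0| := abs_sub _ _
      have : y j' c' - (if j' = j ∧ c' = c then δ else 0) - x j' c' =
          y j' c' - x j' c' - (if j' = j ∧ c' = c then δ else 0) := by ring
      rw [this]
      nlinarith


theorem reach_saturated {n k : ℕ} {A : Fin n → Finset C} {x : Fin n → C → ℝ}
    {S : Finset (Fin n)} (hmax : IsMaxFlow n k A x)
    {c : C} (h : Reach n k A x S (.inr c)) : ∑ j, x j c = 1 := by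
  obtain ⟨hfeas, hopt⟩ := hmax
  refine le_antisymm (hfeas.2.2.2 c) ?_
  by_contra hlt
  push_neg at hlt
  obtain ⟨M, hM0, hM⟩ := reach_inv hfeas h
  obtain ⟨y, δ, hδ0, hδε, hy0, hysupp, hycap, hinflne, hinflc, _⟩ :=
    hM (1 - ∑ j, x j c) (by linarith)
  have hyfeas : IsFeasibleFlow n k A y := by
    refine ⟨hy0, hysupp, hycap, fun c' => ?_⟩
    by_cases hcc : c' = c
    · subst hcc
      rw [hinflc]
      linarith
    · rw [hinflne c' hcc]
      exact hfeas.2.2.2 c'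
  have hcols : ∀ c', ∑ j, y j c' = (∑ j, x j c') + (if c' = c then δ else 0) := by
    intro c'
    by_cases hcc : c' = c
    · subst hcc
      rw [hinflc, if_pos rfl]
    · rw [hinflne c' hcc, if_neg hcc, add_zero]
  have hval : flowValue y = flowValue x + δ := by
    unfold flowValue
    rw [Finset.sum_comm (f := fun i c => y i c), Finset.sum_comm (f := fun i c => x i c)]
    rw [Finset.sum_congr rfl (fun c' _ => hcols c'), Finset.sum_add_distrib]
    simp
  have := hopt y hyfeas
  rw [hval] at this
  linarith

end GRPAux

/-- If a fractional committee elementwise dominates the committee given by some maximum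
flow on the network representation (`p c ≥ f(c,t) = ∑ i, x i c` for all `c`), then it
satisfies group resource proportionality. -/
theorem dominates_maxflow_implies_grp {C : Type*} [Fintype C] [DecidableEq C]
    (n k : ℕ) (hn : 0 < n) (hk : k ≤ Fintype.card C)
    (A : Fin n → Finset C) (x : Fin n → C → ℝ) (p : C → ℝ)
    (hp0 : ∀ c, 0 ≤ p c) (hp1 : ∀ c, p c ≤ 1) (hsum : ∑ c, p c = (k : ℝ))
    (hx : IsMaxFlow n k A x)
    (hdom : ∀ c, ∑ i, x i c ≤ p c) :
    GRP n k A p := by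
  intro S
  classical
  have hfeas := hx.1
  obtain ⟨hx0, hxsupp, hxcap, hxsink⟩ := hfeas
  have hfeas := hx.1
  set T' : Finset (Fin n) := S.filter (fun i => Reach n k A x S (.inl i)) with hT'
  have hT'S : T' ⊆ S := Finset.filter_subset _ _
  set F : Finset C := (S.sup A).filter (fun c => Reach n k A x S (.inr c)) with hF
  have hTsub : T'.sup A ⊆ F := by
    intro c hc
    rw [Finset.mem_sup] at hc
    obtain ⟨i, hiT, hci⟩ := hc
    rw [hT', Finset.mem_filter] at hiT
    rw [hF, Finset.mem_filter]
    exact ⟨Finset.mem_sup.mpr ⟨i, hiT.1, hci⟩, Reach.cand i c hiT.2 hci⟩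
  have hsat : ∀ c ∈ F, ∑ j, x j c = 1 := by
    intro c hc
    exact reach_saturated hx (Finset.mem_filter.mp hc).2
  have hfull : ∀ i ∈ S \ T', ∑ c', x i c' = (k : ℝ) / n := by
    intro i hi
    rw [Finset.mem_sdiff] at hi
    have hnr : ¬ Reach n k A x S (.inl i) := by
      intro hr
      exact hi.2 (by rw [hT', Finset.mem_filter]; exact ⟨hi.1, hr⟩)
    refine le_antisymm (hxcap i) ?_
    by_contra hlt
    push_neg at hlt
    exact hnr (Reach.base i hi.1 hlt)
  have hzero : ∀ i ∈ S \ T', ∀ c, Reach n k A x S (.inr c) → x i c = 0 := by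
    intro i hi c hrc
    rw [Finset.mem_sdiff] at hi
    by_contra hne
    have hpos : 0 < x i c := lt_of_le_of_ne (hx0 i c) (Ne.symm hne)
    exact hi.2 (by rw [hT', Finset.mem_filter]; exact ⟨hi.1, Reach.voter i c hrc hpos⟩)
  have hAU : ∀ i ∈ S, A i ⊆ S.sup A := fun i hi => Finset.le_sup hi
  have key : ((S \ T').card : ℝ) * ((k : ℝ) / n) + (F.card : ℝ) ≤
      ∑ c ∈ S.sup A, ∑ j, x j c := by
    rw [← Finset.sum_filter_add_sum_filter_not (S.sup A)
      (fun c => Reach n k A x S (.inr c)) (fun c => ∑ j, x j c)]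
    have part1 : (F.card : ℝ) = ∑ c ∈ F, ∑ j, x j c := by
      rw [Finset.sum_congr rfl hsat, Finset.sum_const, nsmul_eq_mul, mul_one]
    have part2 : ((S \ T').card : ℝ) * ((k : ℝ) / n) ≤
        ∑ c ∈ (S.sup A).filter (fun c => ¬ Reach n k A x S (.inr c)), ∑ j, x j c := by
      have step1 : ∀ c ∈ (S.sup A).filter (fun c => ¬ Reach n k A x S (.inr c)),
          ∑ i ∈ S \ T', x i c ≤ ∑ j, x j c := by
        intro c _
        exact Finset.sum_le_sum_of_subset_of_nonneg (Finset.subset_univ _)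
          (fun i _ _ => hx0 i c)
      calc ((S \ T').card : ℝ) * ((k : ℝ) / n)
          = ∑ i ∈ S \ T', ∑ c', x i c' := by
            rw [Finset.sum_congr rfl hfull, Finset.sum_const, nsmul_eq_mul]
        _ = ∑ i ∈ S \ T',
              ∑ c ∈ (S.sup A).filter (fun c => ¬ Reach n k A x S (.inr c)), x i c := by
            refine Finset.sum_congr rfl fun i hi => ?_
            refine (Finset.sum_subset (Finset.subset_univ _) ?_).symm
            intro c _ hcn
            rw [Finset.mem_filter] at hcn
            push_neg at hcn
            by_cases hcU : c ∈ S.sup A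
            · exact hzero i hi c (hcn hcU)
            · have : c ∉ A i := fun hca => hcU (hAU i (Finset.mem_sdiff.mp hi).1 hca)
              exact hxsupp i c this
        _ = ∑ c ∈ (S.sup A).filter (fun c => ¬ Reach n k A x S (.inr c)),
              ∑ i ∈ S \ T', x i c := Finset.sum_comm
        _ ≤ _ := Finset.sum_le_sum step1
    rw [hF] at part1
    linarith
  have hdomsum : ∑ c ∈ S.sup A, ∑ j, x j c ≤ ∑ c ∈ S.sup A, p c :=
    Finset.sum_le_sum fun c _ => hdom c
  have hpen : (T'.card : ℝ) * k / n - ((T'.sup A).card : ℝ) ≤ grpPenalty n k A S := by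
    unfold grpPenalty
    exact Finset.le_sup' (fun T => (T.card : ℝ) * k / n - ((T.sup A).card : ℝ))
      (Finset.mem_powerset.mpr hT'S)
  have hcard : ((S \ T').card : ℝ) = (S.card : ℝ) - (T'.card : ℝ) := by
    rw [Finset.card_sdiff_of_subset hT'S, Nat.cast_sub (Finset.card_le_card hT'S)]
  have hFT : ((T'.sup A).card : ℝ) ≤ (F.card : ℝ) := by
    exact_mod_cast Finset.card_le_card hTsub
  have hexp : ((S \ T').card : ℝ) * ((k : ℝ) / n) =
      (S.card : ℝ) * k / n - (T'.card : ℝ) * k / n := by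
    rw [hcard]; ring
  linarith
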